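/- arXiv:0901.2589 — 2 statements merged into one kernel-verified Lean document; each statement's English description precedes it below -/
import Mathlib

section
/- For every pair of nonempty finite sets A, B in the plane ℝ², there exists a line L such that L bisects A (at most half the points of A lie strictly on each side of L), L bisects B similarly, and L contains at least one point of A and at least one point of B. -/
/-!
Rotate a unit direction `u(t) = (cos t, sin t)` through half a turn. Bisection is unaffected by
removing one point of an even set, so we may take `#A` and `#B` odd; then the projections
`⟪u(t), ·⟫` of each set have a unique median, which is attained, depends continuously on `t`
(it is a min-max of finitely many continuous functions) and changes sign when `u` is replaced
by `-u`. The difference of the two medians is therefore a continuous function that changes sign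
between `t = 0` and `t = π`, and at one of its zeros the common median is the offset of the line.
-/

open Finset Real

section Median

variable {α : Type*}

def IsMedian (X : Finset α) (f : α → ℝ) (c : ℝ) : Prop :=
  2 * #{x ∈ X | f x < c} ≤ #X ∧ 2 * #{x ∈ X | c < f x} ≤ #X

variable {X : Finset α} {f : α → ℝ} {c c' : ℝ}

lemma IsMedian.neg (h : IsMedian X f c) : IsMedian X (fun x => -f x) (-c) := by
  simpa only [IsMedian, neg_lt_neg_iff, and_comm] using h

lemma IsMedian.exists_eq (hX : Odd #X) (h : IsMedian X f c) : ∃ x ∈ X, f x = c := by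
  by_contra! hne
  have hsplit := card_filter_add_card_filter_not (s := X) (fun x => f x < c)
  rw [filter_congr fun x hx => (not_lt.trans (hne x hx).symm.le_iff_lt)] at hsplit
  obtain ⟨n, hn⟩ := hX
  unfold IsMedian at h
  omega

lemma IsMedian.eq (hX : Odd #X) (h : IsMedian X f c) (h' : IsMedian X f c') : c = c' := by
  classical
  by_contra hne
  wlog hlt : c < c' generalizing c c'
  · exact this h' h (Ne.symm hne) ((Ne.symm hne).lt_or_gt.resolve_right hlt)
  have hdisj : Disjoint {x ∈ X | f x ≤ c} {x ∈ X | c' ≤ f x} :=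
    disjoint_filter.2 fun x _ h₁ h₂ => (h₁.trans_lt (hlt.trans_le h₂)).false
  have hunion := card_le_card (union_subset (filter_subset (fun x => f x ≤ c) X)
    (filter_subset (fun x => c' ≤ f x) X))
  rw [card_union_of_disjoint hdisj] at hunion
  have hc := card_filter_add_card_filter_not (s := X) (fun x => f x ≤ c)
  have hc' := card_filter_add_card_filter_not (s := X) (fun x => c' ≤ f x)
  simp only [not_le] at hc hc'
  obtain ⟨n, hn⟩ := hX
  unfold IsMedian at h h'
  omega

lemma two_mul_card_filter_le_of_erase [DecidableEq α] (hX : Even #X) {a : α} (ha : a ∈ X)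
    (p : α → Prop) [DecidablePred p] (h : 2 * #{x ∈ X.erase a | p x} ≤ #(X.erase a)) :
    2 * #{x ∈ X | p x} ≤ #X := by
  have hle : #{x ∈ X | p x} - 1 ≤ #{x ∈ X.erase a | p x} := by
    rw [filter_erase]
    exact pred_card_le_card_erase
  rw [card_erase_of_mem ha] at h
  obtain ⟨n, hn⟩ := hX
  have hpos := card_pos.2 ⟨a, ha⟩
  omega

lemma exists_odd_card_subset_forall_isMedian (hX : X.Nonempty) :
    ∃ Y ⊆ X, Odd #Y ∧ ∀ f c, IsMedian Y f c → IsMedian X f c := by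
  classical
  rcases Nat.even_or_odd #X with heven | hodd
  · obtain ⟨a, ha⟩ := hX
    refine ⟨X.erase a, erase_subset a X, ?_, fun f c h => ⟨?_, ?_⟩⟩
    · rw [card_erase_of_mem ha]
      exact Nat.Even.sub_odd (card_pos.2 ⟨a, ha⟩) heven odd_one
    · exact two_mul_card_filter_le_of_erase heven ha _ h.1
    · exact two_mul_card_filter_le_of_erase heven ha _ h.2
  · exact ⟨X, Subset.rfl, hodd, fun _ _ => id⟩

end Median

section OrderStatistic

variable {α : Type*}

/-- The `k`-th smallest value of `f` on `X`, as the least possible maximum of `f` on a `k`-subset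
(junk value `0` for `k = 0`). -/
noncomputable def orderStatistic (X : Finset α) (f : α → ℝ) {k : ℕ} (hk : k ≤ #X) : ℝ :=
  (X.powersetCard k).inf' (powersetCard_nonempty.2 hk)
    fun S => if h : S.Nonempty then S.sup' h f else 0

variable {X : Finset α} {k : ℕ} (hk : k ≤ #X)

lemma card_filter_lt_orderStatistic (hk0 : 0 < k) (f : α → ℝ) :
    #{x ∈ X | f x < orderStatistic X f hk} < k := by
  by_contra! hle
  obtain ⟨S, hS, hSk⟩ := exists_subset_card_eq hle
  have hSne : S.Nonempty := card_pos.1 (hSk ▸ hk0)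
  have hSX : S ∈ X.powersetCard k := mem_powersetCard.2 ⟨hS.trans (filter_subset _ X), hSk⟩
  have hmin := inf'_le (fun S => if h : S.Nonempty then S.sup' h f else 0) hSX
  rw [dif_pos hSne] at hmin
  obtain ⟨x, hx, hxmax⟩ := exists_mem_eq_sup' hSne f
  have hlt := (mem_filter.1 (hS hx)).2
  rw [orderStatistic] at hlt
  linarith

lemma card_filter_orderStatistic_lt (hk0 : 0 < k) (f : α → ℝ) :
    #{x ∈ X | orderStatistic X f hk < f x} ≤ #X - k := by
  classical
  obtain ⟨S, hSX, hmin⟩ := exists_mem_eq_inf' (powersetCard_nonempty.2 hk)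
    fun S => if h : S.Nonempty then S.sup' h f else 0
  obtain ⟨hSX, hSk⟩ := mem_powersetCard.1 hSX
  have hSne : S.Nonempty := card_pos.1 (hSk ▸ hk0)
  rw [dif_pos hSne] at hmin
  have hdisj : Disjoint S {x ∈ X | orderStatistic X f hk < f x} := by
    refine disjoint_left.2 fun x hxS hx => ?_
    have := (mem_filter.1 hx).2
    rw [orderStatistic, hmin] at this
    exact (le_sup' f hxS).not_gt this
  have := card_le_card (union_subset hSX (filter_subset (fun x => orderStatistic X f hk < f x) X))
  rw [card_union_of_disjoint hdisj] at this
  omega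

lemma continuous_orderStatistic {v : ℝ → α → ℝ} (hv : ∀ x, Continuous fun t => v t x) :
    Continuous fun t => orderStatistic X (v t) hk := by
  refine Continuous.finset_inf'_apply _ fun S _ => ?_
  by_cases hS : S.Nonempty
  · simpa only [dif_pos hS] using Continuous.finset_sup'_apply hS fun x _ => hv x
  · simpa only [dif_neg hS] using continuous_const

end OrderStatistic

section ContinuousMedian

variable {α : Type*} {X : Finset α}

lemma isMedian_orderStatistic (hX : X.Nonempty) (f : α → ℝ) :
    IsMedian X f (orderStatistic X f (k := (#X + 1) / 2) (by omega)) := by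
  have hpos := card_pos.2 hX
  have hk : (#X + 1) / 2 ≤ #X := by omega
  have hlt := card_filter_lt_orderStatistic hk (by omega) f
  have hgt := card_filter_orderStatistic_lt hk (by omega) f
  constructor <;> omega

lemma exists_continuous_isMedian (hX : X.Nonempty) {v : ℝ → α → ℝ}
    (hv : ∀ x, Continuous fun t => v t x) :
    ∃ m : ℝ → ℝ, Continuous m ∧ ∀ t, IsMedian X (v t) (m t) :=
  ⟨_, continuous_orderStatistic _ hv, fun t => isMedian_orderStatistic hX (v t)⟩

theorem exists_isMedian_isMedian_of_antipodal {Y : Finset α} (hX : Odd #X) (hY : Odd #Y)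
    {v : ℝ → α → ℝ} (hv : ∀ x, Continuous fun t => v t x) {a b : ℝ}
    (hab : ∀ x, v b x = -v a x) :
    ∃ t c, IsMedian X (v t) c ∧ IsMedian Y (v t) c := by
  have median_antipodal {Z : Finset α} (hZ : Odd #Z) {m : ℝ → ℝ}
      (hm : ∀ t, IsMedian Z (v t) (m t)) : m b = -m a :=
    (hm b).eq hZ (funext hab ▸ (hm a).neg)
  obtain ⟨mX, hmX_cont, hmX⟩ := exists_continuous_isMedian (card_pos.1 hX.pos) hv
  obtain ⟨mY, hmY_cont, hmY⟩ := exists_continuous_isMedian (card_pos.1 hY.pos) hv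
  have hanti : mX b - mY b = -(mX a - mY a) := by
    rw [median_antipodal hX hmX, median_antipodal hY hmY]
    ring
  obtain ⟨t, ht⟩ : (0 : ℝ) ∈ Set.range fun t => mX t - mY t := by
    refine mem_range_of_exists_le_of_exists_ge (hmX_cont.sub hmY_cont) ?_ ?_ <;>
    rcases le_total (mX a - mY a) 0 with h | h
    exacts [⟨a, h⟩, ⟨b, by linarith⟩, ⟨b, by linarith⟩, ⟨a, h⟩]
  exact ⟨t, mX t, hmX t, sub_eq_zero.1 ht ▸ hmY t⟩

end ContinuousMedian

noncomputable def unitVec (t : ℝ) : EuclideanSpace ℝ (Fin 2) := !₂[cos t, sin t]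

lemma norm_unitVec (t : ℝ) : ‖unitVec t‖ = 1 := by
  simp [unitVec, EuclideanSpace.norm_eq, Fin.sum_univ_two]

lemma unitVec_add_pi (t : ℝ) : unitVec (t + π) = -unitVec t := by
  ext i; fin_cases i <;> simp [unitVec]

lemma continuous_unitVec : Continuous unitVec := by
  unfold unitVec
  fun_prop

/-- For every pair of nonempty finite sets `A`, `B` in the plane, there is a line
(given by a unit normal `u` and offset `c`) that bisects both `A` and `B`
(at most half the points strictly on each side) and contains a point of each. -/
theorem ham_sandwich_mayo_discrete_plane
    (A B : Finset (EuclideanSpace ℝ (Fin 2))) (hA : A.Nonempty) (hB : B.Nonempty) :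
    ∃ (u : EuclideanSpace ℝ (Fin 2)) (c : ℝ), ‖u‖ = 1 ∧
      2 * (A.filter (fun x => c < (inner ℝ u x : ℝ))).card ≤ A.card ∧
      2 * (A.filter (fun x => (inner ℝ u x : ℝ) < c)).card ≤ A.card ∧
      2 * (B.filter (fun x => c < (inner ℝ u x : ℝ))).card ≤ B.card ∧
      2 * (B.filter (fun x => (inner ℝ u x : ℝ) < c)).card ≤ B.card ∧
      (∃ a ∈ A, (inner ℝ u a : ℝ) = c) ∧ (∃ b ∈ B, (inner ℝ u b : ℝ) = c) := by
  obtain ⟨A', hA'A, hA'odd, hA'⟩ := exists_odd_card_subset_forall_isMedian hA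
  obtain ⟨B', hB'B, hB'odd, hB'⟩ := exists_odd_card_subset_forall_isMedian hB
  obtain ⟨t, c, hA'c, hB'c⟩ := exists_isMedian_isMedian_of_antipodal hA'odd hB'odd
    (v := fun t x => inner ℝ (unitVec t) x) (a := 0) (b := π)
    (fun x => continuous_unitVec.inner continuous_const)
    (fun x => by rw [← zero_add π, unitVec_add_pi, inner_neg_left])
  obtain ⟨a, ha, hac⟩ := hA'c.exists_eq hA'odd
  obtain ⟨b, hb, hbc⟩ := hB'c.exists_eq hB'odd
  obtain ⟨hA_below, hA_above⟩ := hA' _ _ hA'c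
  obtain ⟨hB_below, hB_above⟩ := hB' _ _ hB'c
  exact ⟨unitVec t, c, norm_unitVec t, hA_above, hA_below, hB_above, hB_below,
    ⟨a, hA'A ha, hac⟩, ⟨b, hB'B hb, hbc⟩⟩
end

section
/- Let A be the union of the two open unit disks in ℝ² centered at (−1,1) and (−1,−1), and B the union of the two open unit disks centered at (1,1) and (1,−1). Then the line y = 0 is the unique line that bisects both A and B in Lebesgue measure, it intersects the closures of A and B, but it intersects neither A nor B. -/
/-!
Translating a unit disk to the origin, the area of its part beyond a line at signed distance `d`
from its centre is a cap area `F d` with `F d + F (-d) = area of the disk`, and `F`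
is strictly decreasing on `[-1, 1]`. If a line `⟪u, x⟫ = c` bisects the union of two disjoint unit
disks with centres `p₁, p₂`, then `F (c - ⟪u, p₁⟫) = F (⟪u, p₂⟫ - c)`; when the disks are tangent
the two arguments sum to at most `2` in absolute value, so they are equal, and the line passes
through the tangency point. For `A` and `B` these points are `(-1, 0)` and `(1, 0)`, which forces
the line `y = 0`.
-/

open MeasureTheory Metric

noncomputable def pt (a b : ℝ) : EuclideanSpace ℝ (Fin 2) :=
  (EuclideanSpace.equiv (Fin 2) ℝ).symm ![a, b]

open Set
open scoped RealInnerProductSpace ENNReal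

section AddHaar

variable {E : Type*} [NormedAddCommGroup E] [MeasurableSpace E] [BorelSpace E]
  (μ : Measure E) [μ.IsAddHaarMeasure] {r : ℝ}

lemma measure_ball_union_ball_inter_eq_half {p₁ p₂ : E} {H : Set E} (h₁ : ball p₁ r ⊆ H)
    (h₂ : ball p₂ r ⊆ Hᶜ) :
    μ ((ball p₁ r ∪ ball p₂ r) ∩ H) = μ (ball p₁ r ∪ ball p₂ r) / 2 := by
  have hdisj : Disjoint (ball p₂ r) H := subset_compl_iff_disjoint_right.1 h₂
  rw [union_inter_distrib_right, inter_eq_left.2 h₁, hdisj.inter_eq, union_empty,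
    measure_union (hdisj.symm.mono_left h₁) measurableSet_ball,
    Measure.addHaar_ball_center μ p₂, ← Measure.addHaar_ball_center μ p₁, ENNReal.add_div,
    ENNReal.add_halves]

end AddHaar

section InnerProductSpace

variable {E : Type*} [NormedAddCommGroup E] [InnerProductSpace ℝ E] {u p : E} {r c : ℝ}

lemma abs_inner_sub_inner_lt_of_mem_ball (hu : ‖u‖ = 1) {x : E} (hx : x ∈ ball p r) :
    |⟪u, x⟫ - ⟪u, p⟫| < r :=
  calc |⟪u, x⟫ - ⟪u, p⟫| = |⟪u, x - p⟫| := by rw [inner_sub_right]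
    _ ≤ ‖u‖ * ‖x - p‖ := abs_real_inner_le_norm u (x - p)
    _ < r := by rwa [hu, one_mul, ← dist_eq_norm]

lemma ball_subset_setOf_lt_inner (hu : ‖u‖ = 1) (h : c + r ≤ ⟪u, p⟫) :
    ball p r ⊆ {x | c < ⟪u, x⟫} := fun x hx => show c < ⟪u, x⟫ by
  linarith [abs_lt.1 (abs_inner_sub_inner_lt_of_mem_ball hu hx)]

lemma ball_subset_setOf_inner_lt (hu : ‖u‖ = 1) (h : ⟪u, p⟫ + r ≤ c) :
    ball p r ⊆ {x | ⟪u, x⟫ < c} := fun x hx => show ⟪u, x⟫ < c by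
  linarith [abs_lt.1 (abs_inner_sub_inner_lt_of_mem_ball hu hx)]

variable [MeasurableSpace E] (μ : Measure E)

noncomputable def capVolume (u : E) (d : ℝ) : ℝ≥0∞ := μ (ball 0 1 ∩ {x | d < ⟪u, x⟫})

variable [μ.IsAddHaarMeasure]

section

variable [BorelSpace E]

lemma measure_ball_inter_setOf_lt_inner :
    μ (ball p 1 ∩ {x | c < ⟪u, x⟫}) = capVolume μ u (c - ⟪u, p⟫) := by
  rw [capVolume, ← measure_preimage_add μ p]
  congr 1
  ext x
  simp [inner_add_right, sub_lt_iff_lt_add']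

end

variable [FiniteDimensional ℝ E]

lemma capVolume_ne_top (d : ℝ) : capVolume μ u d ≠ ⊤ :=
  ((measure_mono inter_subset_left).trans_lt measure_ball_lt_top).ne

variable [BorelSpace E]

lemma measure_setOf_inner_eq (hu : u ≠ 0) (d : ℝ) : μ {x | ⟪u, x⟫ = d} = 0 := by
  have hsurj : Function.Surjective (innerₛₗ ℝ u) := fun y =>
    ⟨(y / ⟪u, u⟫) • u, by simp [hu]⟩
  have hae : ∀ᵐ x ∂μ, innerₛₗ ℝ u x ∈ ({d}ᶜ : Set ℝ) :=
    (ae_comp_linearMap_mem_iff _ μ volume hsurj (measurableSet_singleton d).compl).2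
      (compl_mem_ae_iff.2 (measure_singleton d))
  simpa [ae_iff] using hae

lemma capVolume_add_capVolume_neg (hu : u ≠ 0) (d : ℝ) :
    capVolume μ u d + capVolume μ u (-d) = μ (ball 0 1) := by
  have hneg : capVolume μ u (-d) = μ (ball 0 1 \ {x | d < ⟪u, x⟫}) := by
    rw [capVolume, ← Measure.measure_preimage_neg μ,
      ← measure_sdiff_null (s := ball 0 1 \ {x | d < ⟪u, x⟫}) (measure_setOf_inner_eq μ hu d)]
    congr 1
    ext x
    simp only [mem_preimage, mem_inter_iff, mem_sdiff, mem_ofPred_eq, mem_ball_zero_iff, norm_neg,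
      inner_neg_right, neg_lt_neg_iff]
    exact ⟨fun ⟨hx, hlt⟩ => ⟨⟨hx, hlt.not_gt⟩, hlt.ne⟩,
      fun ⟨⟨hx, hle⟩, hne⟩ => ⟨hx, (not_lt.1 hle).lt_of_ne hne⟩⟩
  rw [hneg, capVolume]
  exact measure_inter_add_sdiff _ (measurableSet_lt measurable_const (by fun_prop))

lemma capVolume_lt_capVolume (hu : ‖u‖ = 1) {s t : ℝ} (hst : s < t) (ht : -1 < t) (hs : s < 1) :
    capVolume μ u t < capVolume μ u s := by
  obtain ⟨m, hm_lo, hm_hi⟩ := exists_between (max_lt (lt_min hst hs) (lt_min ht (by norm_num)))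
  set slab := ball (0 : E) 1 ∩ ({x | s < ⟪u, x⟫} ∩ {x | ⟪u, x⟫ < t})
  have hslab_open : IsOpen slab :=
    isOpen_ball.inter ((isOpen_lt continuous_const (by fun_prop)).inter
      (isOpen_lt (by fun_prop) continuous_const))
  have hm : m • u ∈ slab := by
    simp only [slab, mem_inter_iff, mem_ball_zero_iff, mem_ofPred_eq, norm_smul, hu, mul_one,
      real_inner_smul_right, real_inner_self_eq_norm_sq, one_pow, Real.norm_eq_abs, abs_lt]
    simp only [max_lt_iff, lt_min_iff] at hm_lo hm_hi
    exact ⟨⟨hm_lo.2, hm_hi.2⟩, hm_lo.1, hm_hi.1⟩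
  have hsub : ball 0 1 ∩ {x | t < ⟪u, x⟫} ⊆ ball 0 1 ∩ {x | s < ⟪u, x⟫} :=
    inter_subset_inter_right _ fun x (hx : t < ⟪u, x⟫) => hst.trans hx
  have hslab_sub : slab ⊆ (ball 0 1 ∩ {x | s < ⟪u, x⟫}) \ (ball 0 1 ∩ {x | t < ⟪u, x⟫}) :=
    fun x ⟨hx, (hsx : s < ⟪u, x⟫), (hxt : ⟪u, x⟫ < t)⟩ =>
      ⟨⟨hx, hsx⟩, fun ⟨_, (htx : t < ⟪u, x⟫)⟩ => (htx.trans hxt).false⟩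
  rw [← tsub_pos_iff_lt, capVolume, capVolume, ← measure_sdiff hsub
    (measurableSet_ball.inter (measurableSet_lt measurable_const (by fun_prop))).nullMeasurableSet
    (capVolume_ne_top μ t)]
  exact (hslab_open.measure_pos μ ⟨_, hm⟩).trans_le (measure_mono hslab_sub)

lemma eq_of_capVolume_eq (hu : ‖u‖ = 1) {s t : ℝ} (hst : |s + t| ≤ 2)
    (h : capVolume μ u s = capVolume μ u t) : s = t := by
  obtain ⟨hlo, hhi⟩ := abs_le.1 hst
  rcases lt_trichotomy s t with hlt | heq | hgt
  · exact absurd h (capVolume_lt_capVolume μ hu hlt (by linarith) (by linarith)).ne'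
  · exact heq
  · exact absurd h (capVolume_lt_capVolume μ hu hgt (by linarith) (by linarith)).ne

lemma inner_add_inner_eq_two_mul_of_measure_inter_eq_half {p₁ p₂ : E} (hu : ‖u‖ = 1)
    (hp : dist p₁ p₂ = 2)
    (h : μ ((ball p₁ 1 ∪ ball p₂ 1) ∩ {x | c < ⟪u, x⟫}) = μ (ball p₁ 1 ∪ ball p₂ 1) / 2) :
    ⟪u, p₁⟫ + ⟪u, p₂⟫ = 2 * c := by
  have hu₀ : u ≠ 0 := norm_ne_zero_iff.1 (by rw [hu]; exact one_ne_zero)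
  have hdisj : Disjoint (ball p₁ 1) (ball p₂ 1) := ball_disjoint_ball (by rw [hp]; norm_num)
  rw [union_inter_distrib_right,
    measure_union (hdisj.mono inter_subset_left inter_subset_left)
      (measurableSet_ball.inter (measurableSet_lt measurable_const (by fun_prop))),
    measure_ball_inter_setOf_lt_inner, measure_ball_inter_setOf_lt_inner,
    measure_union hdisj measurableSet_ball, Measure.addHaar_ball_center μ p₁,
    Measure.addHaar_ball_center μ p₂, ENNReal.add_div, ENNReal.add_halves,
    ← capVolume_add_capVolume_neg μ hu₀ (c - ⟪u, p₂⟫), neg_sub] at h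
  have hcap : capVolume μ u (c - ⟪u, p₁⟫) = capVolume μ u (⟪u, p₂⟫ - c) :=
    (ENNReal.add_left_inj (capVolume_ne_top μ _)).1 (h.trans (add_comm _ _))
  have hsum : |(c - ⟪u, p₁⟫) + (⟪u, p₂⟫ - c)| ≤ 2 :=
    calc |(c - ⟪u, p₁⟫) + (⟪u, p₂⟫ - c)| = |⟪u, p₂ - p₁⟫| := by rw [inner_sub_right]; ring_nf
      _ ≤ ‖u‖ * ‖p₂ - p₁‖ := abs_real_inner_le_norm u _
      _ = 2 := by rw [hu, one_mul, ← dist_eq_norm, dist_comm, hp]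
  linarith [eq_of_capVolume_eq μ hu hsum hcap]

end InnerProductSpace

section Plane

@[simp] lemma pt_apply_zero (a b : ℝ) : pt a b 0 = a := rfl

@[simp] lemma pt_apply_one (a b : ℝ) : pt a b 1 = b := rfl

lemma inner_eq_fin_two (x y : EuclideanSpace ℝ (Fin 2)) : ⟪x, y⟫ = x 0 * y 0 + x 1 * y 1 := by
  simp [PiLp.inner_apply, Fin.sum_univ_two, mul_comm]

lemma norm_sq_eq_fin_two (x : EuclideanSpace ℝ (Fin 2)) : ‖x‖ ^ 2 = x 0 ^ 2 + x 1 ^ 2 := by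
  simp [EuclideanSpace.real_norm_sq_eq, Fin.sum_univ_two]

lemma dist_pt_pt (a b a' b' : ℝ) : dist (pt a b) (pt a' b') = √((a - a') ^ 2 + (b - b') ^ 2) := by
  simp [EuclideanSpace.dist_eq, Fin.sum_univ_two, Real.dist_eq, sq_abs]

lemma norm_pt_zero_one : ‖pt 0 1‖ = 1 := by
  rw [← pow_eq_one_iff_of_nonneg (norm_nonneg _) two_ne_zero, norm_sq_eq_fin_two]
  norm_num

noncomputable def unitDiskPair (h : ℝ) : Set (EuclideanSpace ℝ (Fin 2)) :=
  ball (pt h 1) 1 ∪ ball (pt h (-1)) 1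

variable (h : ℝ)

lemma ball_pt_one_subset : ball (pt h 1) 1 ⊆ {x | 0 < ⟪pt 0 1, x⟫} :=
  ball_subset_setOf_lt_inner norm_pt_zero_one (by simp [inner_eq_fin_two])

lemma ball_pt_neg_one_subset : ball (pt h (-1)) 1 ⊆ {x | ⟪pt 0 1, x⟫ < 0} :=
  ball_subset_setOf_inner_lt norm_pt_zero_one (by simp [inner_eq_fin_two])

lemma volume_unitDiskPair_inter_upper :
    volume (unitDiskPair h ∩ {x | 0 < ⟪pt 0 1, x⟫}) = volume (unitDiskPair h) / 2 :=
  measure_ball_union_ball_inter_eq_half volume (ball_pt_one_subset h)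
    ((ball_pt_neg_one_subset h).trans fun x (hx : ⟪pt 0 1, x⟫ < 0) => hx.not_gt)

lemma volume_unitDiskPair_inter_lower :
    volume (unitDiskPair h ∩ {x | ⟪pt 0 1, x⟫ < 0}) = volume (unitDiskPair h) / 2 := by
  rw [unitDiskPair, union_comm]
  exact measure_ball_union_ball_inter_eq_half volume (ball_pt_neg_one_subset h)
    ((ball_pt_one_subset h).trans fun x (hx : 0 < ⟪pt 0 1, x⟫) => hx.not_gt)

lemma eq_mul_of_volume_unitDiskPair_inter_eq_half {u : EuclideanSpace ℝ (Fin 2)} {c : ℝ}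
    (hu : ‖u‖ = 1)
    (hbis : volume (unitDiskPair h ∩ {x | c < ⟪u, x⟫}) = volume (unitDiskPair h) / 2) :
    c = h * u 0 := by
  have hdist : dist (pt h 1) (pt h (-1)) = 2 := by
    rw [dist_pt_pt, show (h - h) ^ 2 + (1 - -1 : ℝ) ^ 2 = 2 ^ 2 by ring, Real.sqrt_sq zero_le_two]
  have := inner_add_inner_eq_two_mul_of_measure_inter_eq_half volume hu hdist hbis
  simp only [inner_eq_fin_two, pt_apply_zero, pt_apply_one] at this
  linarith

lemma nonempty_setOf_inner_eq_zero_inter_closure_unitDiskPair :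
    ({x | ⟪pt 0 1, x⟫ = 0} ∩ closure (unitDiskPair h)).Nonempty := by
  refine ⟨pt h 0, by simp [inner_eq_fin_two], closure_mono subset_union_left ?_⟩
  rw [closure_ball _ one_ne_zero, mem_closedBall, dist_pt_pt]
  norm_num

lemma setOf_inner_eq_zero_inter_unitDiskPair :
    {x | ⟪pt 0 1, x⟫ = 0} ∩ unitDiskPair h = ∅ :=
  eq_empty_of_forall_notMem fun _ ⟨hxL, hx⟩ =>
    hx.elim (fun hx => (ball_pt_one_subset h hx).ne' hxL)
      (fun hx => (ball_pt_neg_one_subset h hx).ne hxL)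

end Plane

/-- Example: `A` the union of the open unit disks centered at `(-1,1)` and `(-1,-1)`, and
`B` the union of the open unit disks centered at `(1,1)` and `(1,-1)`. The line `y = 0`
(with unit normal `(0,1)` and offset `0`) bisects both `A` and `B`; it is the unique such
line; it meets the closures of `A` and `B` but meets neither `A` nor `B`. -/
theorem mayo_example_open_disks :
    let A : Set (EuclideanSpace ℝ (Fin 2)) := ball (pt (-1) 1) 1 ∪ ball (pt (-1) (-1)) 1
    let B : Set (EuclideanSpace ℝ (Fin 2)) := ball (pt 1 1) 1 ∪ ball (pt 1 (-1)) 1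
    let L : Set (EuclideanSpace ℝ (Fin 2)) := {x | (inner ℝ (pt 0 1) x : ℝ) = 0}
    (volume (A ∩ {x | (0:ℝ) < inner ℝ (pt 0 1) x}) = volume A / 2 ∧
     volume (A ∩ {x | (inner ℝ (pt 0 1) x : ℝ) < 0}) = volume A / 2 ∧
     volume (B ∩ {x | (0:ℝ) < inner ℝ (pt 0 1) x}) = volume B / 2 ∧
     volume (B ∩ {x | (inner ℝ (pt 0 1) x : ℝ) < 0}) = volume B / 2) ∧
    (∀ (u : EuclideanSpace ℝ (Fin 2)) (c : ℝ), ‖u‖ = 1 →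
      volume (A ∩ {x | c < (inner ℝ u x : ℝ)}) = volume A / 2 →
      volume (A ∩ {x | (inner ℝ u x : ℝ) < c}) = volume A / 2 →
      volume (B ∩ {x | c < (inner ℝ u x : ℝ)}) = volume B / 2 →
      volume (B ∩ {x | (inner ℝ u x : ℝ) < c}) = volume B / 2 →
      {x : EuclideanSpace ℝ (Fin 2) | (inner ℝ u x : ℝ) = c} = L) ∧
    (L ∩ closure A).Nonempty ∧ (L ∩ closure B).Nonempty ∧
    L ∩ A = ∅ ∧ L ∩ B = ∅ := by
  intro A B L
  refine ⟨⟨volume_unitDiskPair_inter_upper (-1), volume_unitDiskPair_inter_lower (-1),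
    volume_unitDiskPair_inter_upper 1, volume_unitDiskPair_inter_lower 1⟩, ?_,
    nonempty_setOf_inner_eq_zero_inter_closure_unitDiskPair (-1),
    nonempty_setOf_inner_eq_zero_inter_closure_unitDiskPair 1,
    setOf_inner_eq_zero_inter_unitDiskPair (-1), setOf_inner_eq_zero_inter_unitDiskPair 1⟩
  intro u c hu hA _ hB _
  have hA' := eq_mul_of_volume_unitDiskPair_inter_eq_half (-1) hu hA
  have hB' := eq_mul_of_volume_unitDiskPair_inter_eq_half 1 hu hB
  have hu₀ : u 0 = 0 := by linarith
  have hc : c = 0 := by linarith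
  have hu₁ : u 1 ≠ 0 := by
    intro hu₁
    have := norm_sq_eq_fin_two u
    rw [hu, hu₀, hu₁] at this
    norm_num at this
  ext x
  simp [L, inner_eq_fin_two, hu₀, hc, hu₁]
end
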